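/- arXiv:1908.10708 — 3 statements merged into one kernel-verified Lean document; each statement's English description precedes it below -/
import Mathlib

section
/- Let X and Y be random variables defined on the same probability space. Then for all real numbers a ≤ b, P(a ≤ X ≤ b) ≤ (1/2)(1 + P(|X − Y| ≤ b − a) + d_TV(X, Y)), where d_TV denotes the total variation distance between the distributions of X and Y. -/
open MeasureTheory

/-- Total variation distance between the laws of two real random variables. -/
noncomputable def dTV {Ω : Type*} [MeasurableSpace Ω] (μ : Measure Ω) (X Y : Ω → ℝ) : ℝ :=
  ⨆ (A : Set ℝ) (_ : MeasurableSet A), |(μ (X ⁻¹' A)).toReal - (μ (Y ⁻¹' A)).toReal|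

/-!
Let `S = {a ≤ X ≤ b}` and `T = {a ≤ Y ≤ b}`. By inclusion–exclusion,
`μ S + μ T ≤ 1 + μ (S ∩ T)`, and on `S ∩ T` we have `|X - Y| ≤ b - a`. On the other hand
`μ S - μ T ≤ d_TV(X, Y)` because `S` and `T` are preimages of the same interval.
Adding the two inequalities gives `2 μ S ≤ 1 + P(|X - Y| ≤ b - a) + d_TV(X, Y)`.
-/

theorem measureReal_add_le_measureReal_univ_add_inter {α : Type*} [MeasurableSpace α]
    (μ : Measure α) [IsFiniteMeasure μ] (s : Set α) {t : Set α} (ht : MeasurableSet t) :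
    μ.real s + μ.real t ≤ μ.real Set.univ + μ.real (s ∩ t) := by
  rw [← measureReal_union_add_inter ht]
  exact add_le_add_left (measureReal_mono (Set.subset_univ _)) _

theorem abs_measureReal_preimage_sub_le_dTV {Ω : Type*} [MeasurableSpace Ω] (μ : Measure Ω)
    [IsFiniteMeasure μ] (X Y : Ω → ℝ) {A : Set ℝ} (hA : MeasurableSet A) :
    |μ.real (X ⁻¹' A) - μ.real (Y ⁻¹' A)| ≤ dTV μ X Y := by
  have hle_univ (B : Set ℝ) : |μ.real (X ⁻¹' B) - μ.real (Y ⁻¹' B)| ≤ μ.real Set.univ :=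
    abs_sub_le_of_nonneg_of_le measureReal_nonneg (measureReal_mono (Set.subset_univ _))
      measureReal_nonneg (measureReal_mono (Set.subset_univ _))
  have hbdd : BddAbove (Set.range fun B : Set ℝ =>
      ⨆ _ : MeasurableSet B, |μ.real (X ⁻¹' B) - μ.real (Y ⁻¹' B)|) :=
    ⟨μ.real Set.univ, Set.forall_mem_range.2 fun B =>
      Real.iSup_le (fun _ => hle_univ B) measureReal_nonneg⟩
  exact le_ciSup_of_le hbdd A <|
    le_ciSup (f := fun _ : MeasurableSet A => |μ.real (X ⁻¹' A) - μ.real (Y ⁻¹' A)|)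
      (Set.finite_range _).bddAbove hA

theorem chatterjee_lemma_general {Ω : Type*} [MeasurableSpace Ω] (μ : Measure Ω)
    [IsProbabilityMeasure μ] (X Y : Ω → ℝ) (hY : Measurable Y)
    (a b : ℝ) :
    (μ {ω | a ≤ X ω ∧ X ω ≤ b}).toReal ≤
      (1 / 2) * (1 + (μ {ω | |X ω - Y ω| ≤ b - a}).toReal + dTV μ X Y) := by
  set S : Set Ω := X ⁻¹' Set.Icc a b
  set T : Set Ω := Y ⁻¹' Set.Icc a b
  have hcover : μ.real S + μ.real T ≤ 1 + μ.real (S ∩ T) := by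
    simpa using measureReal_add_le_measureReal_univ_add_inter μ S (hY measurableSet_Icc)
  have hclose : μ.real (S ∩ T) ≤ μ.real {ω | |X ω - Y ω| ≤ b - a} :=
    measureReal_mono fun ω ⟨⟨haX, hXb⟩, haY, hYb⟩ =>
      show |X ω - Y ω| ≤ b - a from abs_sub_le_iff.2 ⟨by linarith, by linarith⟩
  have htv : μ.real S - μ.real T ≤ dTV μ X Y :=
    (le_abs_self _).trans (abs_measureReal_preimage_sub_le_dTV μ X Y measurableSet_Icc)
  change μ.real S ≤ (1 / 2) * (1 + μ.real {ω | |X ω - Y ω| ≤ b - a} + dTV μ X Y)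
  linarith

/-- Chatterjee's lemma: P(a ≤ X ≤ b) ≤ (1/2)(1 + P(|X − Y| ≤ b − a) + d_TV(X, Y)). -/
theorem chatterjee_lemma {Ω : Type*} [MeasurableSpace Ω] (μ : Measure Ω)
    [IsProbabilityMeasure μ] (X Y : Ω → ℝ) (hX : Measurable X) (hY : Measurable Y)
    (a b : ℝ) (hab : a ≤ b) :
    (μ {ω | a ≤ X ω ∧ X ω ≤ b}).toReal ≤
      (1 / 2) * (1 + (μ {ω | |X ω - Y ω| ≤ b - a}).toReal + dTV μ X Y) :=
  chatterjee_lemma_general μ X Y hY a b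
end

section
/- If a sequence of random variables (X_n) has fluctuations of order at least (u_n), then there exists c > 0 such that Var(X_n) > c·u_n² for all n sufficiently large. -/
open MeasureTheory ProbabilityTheory

/-- `X n` has fluctuations of order at least `u n`. -/
def HasFluctuationsAtLeast {Ω : Type*} [MeasurableSpace Ω] (μ : Measure Ω)
    (X : ℕ → Ω → ℝ) (u : ℕ → ℝ) : Prop :=
  ∃ c₁ > (0:ℝ), ∃ c₂ > (0:ℝ), ∃ N : ℕ, ∀ n ≥ N, ∀ a b : ℝ, a ≤ b → b - a ≤ c₁ * u n →
    (μ {ω | a ≤ X n ω ∧ X n ω ≤ b}).toReal ≤ 1 - c₂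

/-- Fluctuations of order at least `u n` imply variance of order at least `u n ^ 2`. -/
theorem fluctuations_imply_variance {Ω : Type*} [MeasurableSpace Ω] (μ : Measure Ω)
    [IsProbabilityMeasure μ] (X : ℕ → Ω → ℝ) (u : ℕ → ℝ) (hu : ∀ n, 0 < u n)
    (hmeas : ∀ n, Measurable (X n)) (hL2 : ∀ n, MemLp (X n) 2 μ)
    (h : HasFluctuationsAtLeast μ X u) :
    ∃ c > (0:ℝ), ∃ N : ℕ, ∀ n ≥ N, c * (u n) ^ 2 < variance (X n) μ := by
  obtain ⟨c₁, hc₁, c₂, hc₂, N, hN⟩ := h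
  refine ⟨c₂ * c₁ ^ 2 / 8, by positivity, N, fun n hn => ?_⟩
  set m := μ[X n] with hm
  set ε := c₁ * u n / 2 with hε
  have hε0 : 0 < ε := by have := hu n; positivity
  -- fluctuation bound
  have hfl := hN n hn (m - ε) (m + ε) (by linarith) (by rw [hε]; ring_nf; linarith)
  -- the bad set
  set A : Set Ω := {ω | ε ≤ |X n ω - m|} with hA
  have hAmeas : MeasurableSet A := by
    apply measurableSet_le measurable_const
    exact ((hmeas n).sub measurable_const).abs
  have hcompl : {ω | m - ε ≤ X n ω ∧ X n ω ≤ m + ε}ᶜ ⊆ A := by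
    intro ω hω
    simp only [Set.mem_compl_iff, Set.mem_setOf_eq, not_and_or, not_le] at hω
    rcases hω with h1 | h1 <;> rw [hA, Set.mem_setOf_eq, le_abs] <;> [right; left] <;> linarith
  have hμA : c₂ ≤ (μ A).toReal := by
    have h1 : (μ {ω | m - ε ≤ X n ω ∧ X n ω ≤ m + ε}ᶜ).toReal ≤ (μ A).toReal := by
      apply ENNReal.toReal_mono (measure_ne_top μ A) (measure_mono hcompl)
    have hBmeas : MeasurableSet {ω | m - ε ≤ X n ω ∧ X n ω ≤ m + ε} :=
      (measurableSet_le measurable_const (hmeas n)).inter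
        (measurableSet_le (hmeas n) measurable_const)
    have h2 : (μ {ω | m - ε ≤ X n ω ∧ X n ω ≤ m + ε}ᶜ).toReal
        = 1 - (μ {ω | m - ε ≤ X n ω ∧ X n ω ≤ m + ε}).toReal := by
      rw [measure_compl hBmeas (measure_ne_top _ _)]
      rw [ENNReal.toReal_sub_of_le (measure_mono (Set.subset_univ _)) (measure_ne_top _ _)]
      simp
    linarith [h2 ▸ h1, hfl]
  -- variance lower bound
  have hint : Integrable (fun ω => (X n ω - m) ^ 2) μ :=
    ((hL2 n).sub (memLp_const m)).integrable_sq
  have hvar : variance (X n) μ = ∫ ω, (X n ω - m) ^ 2 ∂μ := by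
    rw [variance_eq_integral (hmeas n).aemeasurable]
  have hlow : ε ^ 2 * (μ A).toReal ≤ ∫ ω, (X n ω - m) ^ 2 ∂μ := by
    calc ε ^ 2 * (μ A).toReal ≤ ∫ ω in A, (X n ω - m) ^ 2 ∂μ := by
          apply setIntegral_ge_of_const_le_real hAmeas (measure_ne_top _ _)
          · intro ω hω
            have : ε ≤ |X n ω - m| := hω
            calc ε ^ 2 ≤ |X n ω - m| ^ 2 := by
                  apply pow_le_pow_left₀ hε0.le this
              _ = (X n ω - m) ^ 2 := sq_abs _
          · exact hint.integrableOn
      _ ≤ ∫ ω, (X n ω - m) ^ 2 ∂μ :=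
          setIntegral_le_integral hint (ae_of_all _ fun ω => sq_nonneg _)
  have key : ε ^ 2 * c₂ ≤ variance (X n) μ := by
    rw [hvar]
    calc ε ^ 2 * c₂ ≤ ε ^ 2 * (μ A).toReal := by nlinarith [sq_nonneg ε]
      _ ≤ _ := hlow
  have : ε ^ 2 * c₂ = c₂ * c₁ ^ 2 / 4 * u n ^ 2 := by rw [hε]; ring
  have hu2 : 0 < u n ^ 2 := by have := hu n; positivity
  nlinarith [key, this, mul_pos (mul_pos hc₂ (pow_pos hc₁ 2)) hu2]
end

section
/- For every α ∈ (0,1) there exist constants c₁, c₂ > 0 such that for all integers m ≥ 0 and all real r with 0 ≤ r ≤ αm, the Bessel function of the first kind satisfies |J_m(r)| ≤ c₁e^{−c₂m}. -/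
set_option maxHeartbeats 1000000

open MeasureTheory Set Complex Real ENNReal

/-- The Bessel function of the first kind of integer order `m`. -/
noncomputable def besselJ (m : ℕ) (r : ℝ) : ℝ :=
  ∑' k : ℕ, (-1 : ℝ) ^ k * (r / 2) ^ (m + 2 * k) /
    ((Nat.factorial k : ℝ) * (Nat.factorial (m + k) : ℝ))

lemma cexp_tsum (z : ℂ) : Complex.exp z = ∑' n : ℕ, z ^ n / n.factorial := by
  rw [Complex.exp_eq_exp_ℂ, NormedSpace.exp_eq_tsum_div]

lemma cexp_summable (z : ℂ) : Summable (fun n : ℕ => z ^ n / n.factorial) := by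
  apply Summable.of_norm
  have := Real.summable_pow_div_factorial ‖z‖
  convert this using 2 with n
  simp [norm_div, norm_pow]

theorem besselJ_key (m : ℕ) (r t : ℝ) (hr : 0 ≤ r) (ht : 1 ≤ t) :
    |besselJ m r| * t ^ m ≤ Real.exp (r / 2 * (t - 1 / t)) := by
  have ht0 : 0 < t := lt_of_lt_of_le one_pos ht
  have hπ : 0 < π := Real.pi_pos
  set a : ℝ := r * t / 2 with ha_def
  set b : ℝ := r / (2 * t) with hb_def
  have ha : 0 ≤ a := by positivity
  have hb : 0 ≤ b := by positivity
  have hba : b ≤ a := by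
    rw [ha_def, hb_def, div_le_div_iff₀ (by positivity) (by positivity)]
    nlinarith
  have hab : a - b = r / 2 * (t - 1 / t) := by
    field_simp [ha_def, hb_def]
    rw [ha_def, hb_def]
    field_simp
  -- the integrand family
  set G : ℕ × ℕ → ℝ → ℂ := fun p θ =>
    (a : ℂ) ^ p.1 / p.1.factorial * ((-(b : ℂ)) ^ p.2 / p.2.factorial) *
      Complex.exp ((((p.1 : ℝ) - p.2 - m : ℝ) : ℂ) * Complex.I * θ) with hG_def
  set B : ℕ × ℕ → ℝ := fun p => a ^ p.1 / p.1.factorial * (b ^ p.2 / p.2.factorial) with hB_def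
  have hBnn : ∀ p, 0 ≤ B p := fun p => by positivity
  have hGnorm : ∀ p θ, ‖G p θ‖ = B p := by
    intro p θ
    have h1 : ((((p.1 : ℝ) - p.2 - m : ℝ) : ℂ) * Complex.I * θ) =
        ((((p.1 : ℝ) - p.2 - m) * θ : ℝ) : ℂ) * Complex.I := by push_cast; ring
    rw [hG_def]
    simp only [h1]
    rw [norm_mul, norm_mul,
      Complex.norm_exp_ofReal_mul_I]
    simp [norm_div, norm_pow, _root_.abs_of_nonneg ha, _root_.abs_of_nonneg hb, hB_def]
  have hBsum : Summable B :=
    (Real.summable_pow_div_factorial a).mul_of_nonneg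
      (Real.summable_pow_div_factorial b)
      (fun n => by positivity) (fun k => by positivity)
  -- the full integrand
  set F : ℝ → ℂ := fun θ =>
    Complex.exp ((a : ℂ) * Complex.exp ((θ : ℂ) * Complex.I)
      - (b : ℂ) * Complex.exp (-((θ : ℂ) * Complex.I))
      - (m : ℂ) * Complex.I * θ) with hF_def
  -- pointwise identity
  have hpt : ∀ θ : ℝ, F θ = ∑' p : ℕ × ℕ, G p θ := by
    intro θ
    show Complex.exp ((a : ℂ) * Complex.exp ((θ : ℂ) * Complex.I)
      - (b : ℂ) * Complex.exp (-((θ : ℂ) * Complex.I))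
      - (m : ℂ) * Complex.I * θ) = _
    set E : ℂ := Complex.exp ((θ : ℂ) * Complex.I) with hE
    set E' : ℂ := Complex.exp (-((θ : ℂ) * Complex.I)) with hE'
    set K : ℂ := Complex.exp (-((m : ℂ) * Complex.I * θ)) with hK
    have harg : (a : ℂ) * E - (b : ℂ) * E' - (m : ℂ) * Complex.I * θ =
        (a : ℂ) * E + (-(b : ℂ) * E') + -((m : ℂ) * Complex.I * θ) := by ring
    rw [harg, Complex.exp_add, Complex.exp_add, ← hK]
    rw [cexp_tsum ((a : ℂ) * E), cexp_tsum (-(b : ℂ) * E')]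
    have S1 := cexp_summable ((a : ℂ) * E)
    have S2 := cexp_summable (-(b : ℂ) * E')
    have S12 : Summable fun p : ℕ × ℕ =>
        ((a : ℂ) * E) ^ p.1 / p.1.factorial * ((-(b : ℂ) * E') ^ p.2 / p.2.factorial) := by
      apply Summable.of_norm
      have hEn : ‖E‖ = 1 := by
        rw [hE, Complex.norm_exp_ofReal_mul_I]
      have hE'n : ‖E'‖ = 1 := by
        have h2 : -((θ : ℂ) * Complex.I) = ((-θ : ℝ) : ℂ) * Complex.I := by push_cast; ring
        rw [hE', h2, Complex.norm_exp_ofReal_mul_I]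
      have h3 : (fun p : ℕ × ℕ => ‖((a : ℂ) * E) ^ p.1 / p.1.factorial *
          ((-(b : ℂ) * E') ^ p.2 / p.2.factorial)‖) = B := by
        funext p
        rw [norm_mul, norm_div, norm_div, norm_pow, norm_pow, norm_mul, norm_mul, hEn, hE'n]
        simp [_root_.abs_of_nonneg ha, _root_.abs_of_nonneg hb, hB_def]
      rw [h3]
      exact hBsum
    rw [Summable.tsum_mul_tsum S1 S2 S12, ← tsum_mul_right]
    refine tsum_congr fun p => ?_
    obtain ⟨n, k⟩ := p
    have key : E ^ n * E' ^ k * K =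
        Complex.exp ((((n : ℝ) - k - m : ℝ) : ℂ) * Complex.I * θ) := by
      rw [hE, hE', hK, ← Complex.exp_nat_mul, ← Complex.exp_nat_mul, ← Complex.exp_add,
        ← Complex.exp_add]
      congr 1
      push_cast
      ring
    calc ((a : ℂ) * E) ^ n / n.factorial * ((-(b : ℂ) * E') ^ k / k.factorial) * K
        = (a : ℂ) ^ n / n.factorial * ((-(b : ℂ)) ^ k / k.factorial) * (E ^ n * E' ^ k * K) := by
          rw [mul_pow, mul_pow]; ring
      _ = _ := by rw [key, hG_def]
  -- interchange of sum and integral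
  have hGcont : ∀ p, Continuous (G p) := by
    intro p
    rw [hG_def]
    fun_prop
  have hswap : ∫ θ in Ioc (0:ℝ) (2*π), ∑' p : ℕ × ℕ, G p θ
      = ∑' p : ℕ × ℕ, ∫ θ in Ioc (0:ℝ) (2*π), G p θ := by
    apply MeasureTheory.integral_tsum
    · exact fun p => (hGcont p).aestronglyMeasurable
    · have hcalc : ∀ p : ℕ × ℕ, ∫⁻ θ in Ioc (0:ℝ) (2*π), ‖G p θ‖ₑ
          = ENNReal.ofReal (B p * (2*π)) := by
        intro p
        have h4 : (fun θ => (‖G p θ‖ₑ : ℝ≥0∞)) = fun _ => ENNReal.ofReal (B p) := by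
          funext θ
          rw [← ofReal_norm, hGnorm]
        rw [h4, MeasureTheory.setLIntegral_const, Real.volume_Ioc,
          ← ENNReal.ofReal_mul (hBnn p)]
        norm_num
      simp_rw [hcalc]
      rw [← ENNReal.ofReal_tsum_of_nonneg
        (fun p => mul_nonneg (hBnn p) (by positivity)) (hBsum.mul_right _)]
      exact ENNReal.ofReal_ne_top
  -- individual integrals
  have hint : ∀ p : ℕ × ℕ, ∫ θ in Ioc (0:ℝ) (2*π), G p θ =
      if p.1 = m + p.2 then
        (a : ℂ) ^ p.1 / p.1.factorial * ((-(b : ℂ)) ^ p.2 / p.2.factorial) * (2*π) else 0 := by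
    intro p
    rw [hG_def]
    simp only []
    rw [MeasureTheory.integral_const_mul]
    rw [← intervalIntegral.integral_of_le (by positivity : (0:ℝ) ≤ 2*π)]
    by_cases h : p.1 = m + p.2
    · rw [if_pos h]
      have h0 : ((p.1 : ℝ) - p.2 - m : ℝ) = 0 := by rw [h]; push_cast; ring
      simp only [h0, Complex.ofReal_zero, zero_mul, Complex.exp_zero]
      rw [intervalIntegral.integral_const]
      simp [Complex.real_smul]
    · rw [if_neg h]
      set w : ℤ := (p.1 : ℤ) - p.2 - m with hw
      have hw0 : w ≠ 0 := by omega
      have hcast : (((p.1 : ℝ) - p.2 - m : ℝ) : ℂ) = (w : ℂ) := by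
        rw [hw]; push_cast; ring
      have hc : ((w : ℂ) * Complex.I) ≠ 0 := by
        simp only [mul_ne_zero_iff]
        refine ⟨?_, Complex.I_ne_zero⟩
        exact_mod_cast hw0
      have heq : ∀ θ : ℝ, (((p.1 : ℝ) - p.2 - m : ℝ) : ℂ) * Complex.I * θ
          = ((w:ℂ) * Complex.I) * θ := by
        intro θ; rw [hcast]
      simp only [heq]
      rw [integral_exp_mul_complex hc]
      have h2π : Complex.exp ((w:ℂ) * Complex.I * (2*(π:ℂ))) = 1 := by
        have harg2 : (w:ℂ) * Complex.I * (2*(π:ℂ)) = (w:ℂ) * (2 * (π:ℂ) * Complex.I) := by ring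
        rw [harg2, Complex.exp_int_mul_two_pi_mul_I]
      push_cast
      rw [h2π]
      simp
  -- value of the sum of integrals
  have hdiag : (∑' p : ℕ × ℕ, ∫ θ in Ioc (0:ℝ) (2*π), G p θ)
      = ((2 * π * t ^ m * besselJ m r : ℝ) : ℂ) := by
    simp_rw [hint]
    set H : ℕ × ℕ → ℂ := fun p => if p.1 = m + p.2 then
      (a : ℂ) ^ p.1 / p.1.factorial * ((-(b : ℂ)) ^ p.2 / p.2.factorial) * (2*π) else 0
      with hH_def
    have hinj : Function.Injective (fun k : ℕ => ((m + k, k) : ℕ × ℕ)) := by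
      intro x y hxy
      simpa using congrArg Prod.snd hxy
    have hsupp : Function.support H ⊆ Set.range (fun k : ℕ => ((m + k, k) : ℕ × ℕ)) := by
      intro p hp
      rw [Function.mem_support, hH_def] at hp
      by_cases h : p.1 = m + p.2
      · exact ⟨p.2, by simp [← h]⟩
      · simp [h] at hp
    rw [← hinj.tsum_eq hsupp]
    have hterm : ∀ k : ℕ, H (m + k, k)
        = ((2 * π * t ^ m * ((-1 : ℝ) ^ k * (r / 2) ^ (m + 2 * k) /
            ((Nat.factorial k : ℝ) * (Nat.factorial (m + k) : ℝ))) : ℝ) : ℂ) := by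
      intro k
      rw [hH_def]
      simp only [if_pos rfl]
      have hmono : a ^ (m + k) * b ^ k = (r / 2) ^ (m + 2 * k) * t ^ m := by
        have ha2 : a = (r / 2) * t := by rw [ha_def]; ring
        have hb2 : b = (r / 2) * t⁻¹ := by rw [hb_def]; field_simp
        rw [ha2, hb2, mul_pow, mul_pow, inv_pow]
        rw [show m + 2 * k = (m + k) + k by ring, pow_add (r/2)]
        rw [show (m + k) = m + k by rfl, pow_add t]
        field_simp
        ring
      have hreal : a ^ (m + k) / ((m + k).factorial : ℝ) * ((-1:ℝ) ^ k * b ^ k / k.factorial)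
          * (2 * π)
          = 2 * π * t ^ m * ((-1 : ℝ) ^ k * (r / 2) ^ (m + 2 * k) /
            ((Nat.factorial k : ℝ) * (Nat.factorial (m + k) : ℝ))) := by
        have hstep : a ^ (m + k) / ((m + k).factorial : ℝ) * ((-1:ℝ) ^ k * b ^ k / k.factorial)
            * (2 * π)
            = (-1:ℝ) ^ k * (a ^ (m + k) * b ^ k) / ((k.factorial : ℝ) * (m + k).factorial)
              * (2 * π) := by ring
        rw [hstep, hmono]
        ring
      rw [← hreal]
      push_cast
      ring
    simp_rw [hterm]
    rw [← Complex.ofReal_tsum]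
    congr 1
    rw [besselJ, tsum_mul_left]
  -- norm bound on F
  have hFnorm : ∀ θ : ℝ, ‖F θ‖ ≤ Real.exp (a - b) := by
    intro θ
    rw [hF_def]
    simp only []
    rw [Complex.norm_exp]
    apply Real.exp_le_exp.2
    have hre : ((a : ℂ) * Complex.exp ((θ : ℂ) * Complex.I)
        - (b : ℂ) * Complex.exp (-((θ : ℂ) * Complex.I))
        - (m : ℂ) * Complex.I * θ).re = (a - b) * Real.cos θ := by
      have e1 : Complex.exp ((θ : ℂ) * Complex.I)
          = (Real.cos θ : ℂ) + (Real.sin θ : ℂ) * Complex.I := by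
        rw [Complex.exp_mul_I]
        push_cast
        simp [Complex.cos_ofReal_re, Complex.sin_ofReal_re]
      have e2 : Complex.exp (-((θ : ℂ) * Complex.I))
          = (Real.cos θ : ℂ) - (Real.sin θ : ℂ) * Complex.I := by
        have h5 : -((θ : ℂ) * Complex.I) = ((-θ : ℝ) : ℂ) * Complex.I := by push_cast; ring
        rw [h5, Complex.exp_mul_I]
        push_cast
        simp [Real.cos_neg, Real.sin_neg]
        ring
      rw [e1, e2]
      simp [Complex.sub_re, Complex.mul_re, Complex.add_re, Complex.mul_im,
        Complex.cos_ofReal_re, Complex.sin_ofReal_re]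
      ring
    rw [hre]
    calc (a - b) * Real.cos θ ≤ (a - b) * 1 :=
          mul_le_mul_of_nonneg_left (Real.cos_le_one θ) (by linarith)
      _ = a - b := mul_one _
  -- conclusion
  have hmain : ((besselJ m r * t ^ m : ℝ) : ℂ)
      = (2 * π : ℝ)⁻¹ • ∫ θ in Ioc (0:ℝ) (2*π), F θ := by
    have : ∫ θ in Ioc (0:ℝ) (2*π), F θ = ((2 * π * t ^ m * besselJ m r : ℝ) : ℂ) := by
      simp only [hpt]
      rw [hswap, hdiag]
    rw [this, Complex.real_smul, ← Complex.ofReal_mul]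
    congr 1
    have h2π0 : (π : ℝ) ≠ 0 := ne_of_gt hπ
    field_simp
  have hnorm : |besselJ m r| * t ^ m = ‖((besselJ m r * t ^ m : ℝ) : ℂ)‖ := by
    rw [Complex.norm_real, Real.norm_eq_abs, abs_mul,
      _root_.abs_of_nonneg (pow_nonneg (le_of_lt ht0) m)]
  rw [hnorm, hmain, norm_smul]
  have hIbound : ‖∫ θ in Ioc (0:ℝ) (2*π), F θ‖ ≤ Real.exp (a - b) * (2 * π) := by
    rw [← intervalIntegral.integral_of_le (by positivity : (0:ℝ) ≤ 2*π)]
    have := intervalIntegral.norm_integral_le_of_norm_le_const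
      (C := Real.exp (a - b)) (f := F) (a := (0:ℝ)) (b := 2*π) (fun θ _ => hFnorm θ)
    calc ‖∫ θ in (0:ℝ)..(2*π), F θ‖ ≤ Real.exp (a - b) * |2*π - 0| := this
      _ = Real.exp (a - b) * (2 * π) := by
          rw [sub_zero, _root_.abs_of_nonneg (by positivity : (0:ℝ) ≤ 2*π)]
  calc ‖(2 * π : ℝ)⁻¹‖ * ‖∫ θ in Ioc (0:ℝ) (2*π), F θ‖
      ≤ (2 * π)⁻¹ * (Real.exp (a - b) * (2 * π)) := by
        rw [Real.norm_eq_abs, _root_.abs_of_pos (by positivity : (0:ℝ) < (2 * π)⁻¹)]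
        exact mul_le_mul_of_nonneg_left hIbound (by positivity)
    _ = Real.exp (a - b) := by field_simp
    _ = Real.exp (r / 2 * (t - 1 / t)) := by rw [hab]

/-- For `α ∈ (0,1)` the Bessel functions satisfy `|J_m(r)| ≤ c₁ e^{−c₂ m}` for `0 ≤ r ≤ αm`. -/
theorem besselJ_exponential_decay (α : ℝ) (hα0 : 0 < α) (hα1 : α < 1) :
    ∃ c₁ > (0:ℝ), ∃ c₂ > (0:ℝ), ∀ m : ℕ, ∀ r : ℝ, 0 ≤ r → r ≤ α * m →
      |besselJ m r| ≤ c₁ * Real.exp (-c₂ * m) := by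
  have h1α : 0 < 1 - α := by linarith
  refine ⟨1, one_pos, (1 - α)^2 / 2, by positivity, fun m r hr0 hrα => ?_⟩
  set t : ℝ := 2 - α with ht_def
  have ht0 : 0 < t := by rw [ht_def]; linarith
  have ht1 : 1 ≤ t := by rw [ht_def]; linarith
  have htm : (0:ℝ) < t ^ m := pow_pos ht0 m
  have key := besselJ_key m r t hr0 ht1
  -- log bound
  have hlog : 1 - t⁻¹ ≤ Real.log t := by
    have h := Real.log_le_sub_one_of_pos (show (0:ℝ) < t⁻¹ by positivity)
    rw [Real.log_inv] at h
    linarith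
  have hineq : (1 - α)^2 / 2 ≤ Real.log t - α / 2 * (t - 1 / t) := by
    have hid : (1 - t⁻¹) - α / 2 * (t - 1 / t) = (1 - α)^2 / 2 := by
      rw [ht_def]
      have h2 : (2 - α) ≠ 0 := by linarith
      field_simp
      ring
    linarith
  have hmono : Real.exp (r / 2 * (t - 1 / t)) ≤ Real.exp (α * m / 2 * (t - 1 / t)) := by
    apply Real.exp_le_exp.2
    have htt : 0 ≤ t - 1 / t := by
      have : 1 / t ≤ 1 := by
        rw [div_le_one ht0]; exact ht1
      linarith
    have : r / 2 ≤ α * m / 2 := by linarith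
    exact mul_le_mul_of_nonneg_right this htt
  have htm_exp : t ^ m = Real.exp (m * Real.log t) := by
    rw [← Real.exp_log ht0, ← Real.exp_nat_mul, Real.exp_log ht0]
  calc |besselJ m r| = |besselJ m r| * t ^ m / t ^ m := by field_simp
    _ ≤ Real.exp (r / 2 * (t - 1 / t)) / t ^ m :=
        (div_le_div_iff_of_pos_right htm).2 key
    _ ≤ Real.exp (α * m / 2 * (t - 1 / t)) / t ^ m :=
        (div_le_div_iff_of_pos_right htm).2 hmono
    _ = Real.exp (α * m / 2 * (t - 1 / t) - m * Real.log t) := by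
        rw [htm_exp, ← Real.exp_sub]
    _ ≤ 1 * Real.exp (-((1 - α)^2 / 2) * m) := by
        rw [one_mul]
        apply Real.exp_le_exp.2
        have hm : (0:ℝ) ≤ m := Nat.cast_nonneg m
        nlinarith [mul_le_mul_of_nonneg_left hineq hm]
end
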